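/- Let f : ℝ^d → ℝ be continuously differentiable, let Y = {x ∈ ℝ^d | ∇f(x) ≠ 0} be its set of regular points, and fix 0 < p < 1/2. Then f is p-improvable on Y: there exists a lower semicontinuous function ξ̃ : Y → (0,1] such that ξ̃(x) ≤ ξ_p^f(x) for all x ∈ Y. (In particular, the function ξ_p^f : ℝ^d → [0,∞] is lower semicontinuous and is positive at every point of Y.) -/

import Mathlib

open MeasureTheory Set Filter

/-- Isotropic Gaussian measure `N(m, σ²I)` on `ℝ^d`, defined by its density
`x ↦ (2π)^{-d/2} σ^{-d} exp(−‖x−m‖²/(2σ²))` w.r.t. Lebesgue measure. -/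
noncomputable def gaussES (d : ℕ) (m : EuclideanSpace ℝ (Fin d)) (σ : ℝ) :
    Measure (EuclideanSpace ℝ (Fin d)) :=
  volume.withDensity fun x =>
    ENNReal.ofReal ((2 * Real.pi) ^ (-(d : ℝ) / 2) * (σ ^ d)⁻¹ *
      Real.exp (-‖x - m‖ ^ 2 / (2 * σ ^ 2)))

/-- Success probability of strict improvement: `p_f^<(m,σ)`. -/
noncomputable def pLt (d : ℕ) (f : EuclideanSpace ℝ (Fin d) → ℝ)
    (m : EuclideanSpace ℝ (Fin d)) (σ : ℝ) : ENNReal :=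
  gaussES d m σ {x | f x < f m}

/-- Success probability of weak improvement: `p_f^≤(m,σ)`. -/
noncomputable def pLe (d : ℕ) (f : EuclideanSpace ℝ (Fin d) → ℝ)
    (m : EuclideanSpace ℝ (Fin d)) (σ : ℝ) : ENNReal :=
  gaussES d m σ {x | f x ≤ f m}

/-- Lower step-size threshold `ξ_p^f(m) = inf {σ > 0 | p_f^<(m,σ) ≤ p}`, with `inf ∅ = ∞`. -/
noncomputable def xiES (d : ℕ) (f : EuclideanSpace ℝ (Fin d) → ℝ) (p : ℝ)
    (m : EuclideanSpace ℝ (Fin d)) : ENNReal :=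
  sInf {s : ENNReal | ∃ σ : ℝ, 0 < σ ∧ s = ENNReal.ofReal σ ∧ pLt d f m σ ≤ ENNReal.ofReal p}

/-- Upper step-size threshold `η_p^f(m) = sup {σ > 0 | p_f^≤(m,σ) ≥ p}`, with `sup ∅ = 0`. -/
noncomputable def etaES (d : ℕ) (f : EuclideanSpace ℝ (Fin d) → ℝ) (p : ℝ)
    (m : EuclideanSpace ℝ (Fin d)) : ENNReal :=
  sSup {s : ENNReal | ∃ σ : ℝ, 0 < σ ∧ s = ENNReal.ofReal σ ∧ ENNReal.ofReal p ≤ pLe d f m σ}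

/-! Substituting `x + σ • u` turns `p_f^<(x, σ)` into the standard Gaussian measure of
`{u | (f (x + σ • u) - f x) / σ < 0}`. At a regular point `m` the function `f` is strictly
differentiable, so these difference quotients tend to `⟪∇f(m), u⟫` as `(x, σ) → (m, 0⁺)`, and
by dominated convergence `p_f^<(x, σ)` tends to the Gaussian measure of a half-space, which is
`1/2 > p`.
Hence `ξ_p^f ≥ c > 0` near `m`, and the supremum over regular points `m` of the bumps `c • 1_U`
is a lower semicontinuous minorant. -/

open scoped Topology ENNReal

section StrictDeriv

variable {𝕜 E F : Type*} [NontriviallyNormedField 𝕜] [NormedAddCommGroup E] [NormedSpace 𝕜 E]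
  [NormedAddCommGroup F] [NormedSpace 𝕜 F] {f : E → F} {f' : E →L[𝕜] F} {m : E}

theorem HasStrictFDerivAt.tendsto_inv_smul_sub (hf : HasStrictFDerivAt f f' m) (u : E) :
    Tendsto (fun q : E × 𝕜 => q.2⁻¹ • (f (q.1 + q.2 • u) - f q.1)) (𝓝 m ×ˢ 𝓝[≠] 0)
      (𝓝 (f' u)) := by
  have hpair : Tendsto (fun q : E × 𝕜 => (q.1 + q.2 • u, q.1)) (𝓝 m ×ˢ 𝓝[≠] 0) (𝓝 (m, m)) := by
    have : Continuous fun q : E × 𝕜 => (q.1 + q.2 • u, q.1) := by fun_prop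
    simpa using (this.tendsto (m, 0)).mono_left
      ((Filter.prod_mono le_rfl nhdsWithin_le_nhds).trans nhds_prod_eq.ge)
  have ho : (fun q : E × 𝕜 => f (q.1 + q.2 • u) - f q.1 - q.2 • f' u) =o[𝓝 m ×ˢ 𝓝[≠] 0]
      fun q => q.2 := by
    have := (hasStrictFDerivAt_iff_isLittleO.mp hf).comp_tendsto hpair
    simp only [Function.comp_def, add_sub_cancel_left, map_smul] at this
    exact this.trans_isBigO (Asymptotics.isBigO_of_le' (c := ‖u‖) _ fun q => by
      rw [norm_smul, mul_comm])
  have hne : ∀ᶠ q : E × 𝕜 in 𝓝 m ×ˢ 𝓝[≠] 0, q.2 ≠ 0 :=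
    tendsto_snd.eventually self_mem_nhdsWithin
  have := ho.tendsto_inv_smul_nhds_zero.add_const (f' u)
  rw [zero_add] at this
  refine this.congr' (hne.mono fun q hq => ?_)
  simp [smul_sub, smul_smul, inv_mul_cancel₀ hq]

end StrictDeriv

section HalfSpace

variable {E : Type*} [NormedAddCommGroup E] [NormedSpace ℝ E] [MeasurableSpace E] [BorelSpace E]
  [FiniteDimensional ℝ E] {μ ν : Measure E} [ν.IsAddHaarMeasure] {ℓ : E →L[ℝ] ℝ}

theorem measure_hyperplane_eq_zero (hμν : μ ≪ ν) (hℓ : ℓ ≠ 0) : μ {u | ℓ u = 0} = 0 := by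
  refine hμν (Measure.addHaar_submodule ν (LinearMap.ker ℓ.toLinearMap) fun h => hℓ ?_)
  ext u
  simpa using (LinearMap.ker_eq_top.mp h ▸ rfl : ℓ.toLinearMap u = 0)

theorem measure_neg_halfSpace_eq_half [IsProbabilityMeasure μ] [μ.IsNegInvariant]
    (hμν : μ ≪ ν) (hℓ : ℓ ≠ 0) : μ {u | ℓ u < 0} = 1 / 2 := by
  have hsymm : μ {u | 0 < ℓ u} = μ {u | ℓ u < 0} := by
    rw [← Measure.measure_neg]
    congr 1
    ext u
    simp
  have hcompl : {u | ℓ u < 0}ᶜ = {u | ℓ u = 0} ∪ {u | 0 < ℓ u} := by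
    ext u
    simp [le_iff_eq_or_lt, eq_comm]
  have hcover := measure_add_measure_compl (μ := μ) (s := {u | ℓ u < 0})
    (measurableSet_lt ℓ.measurable measurable_const)
  rw [hcompl, measure_union _ (measurableSet_lt measurable_const ℓ.measurable),
    measure_hyperplane_eq_zero hμν hℓ, zero_add, hsymm, ← two_mul, measure_univ] at hcover
  · rw [ENNReal.eq_div_iff two_ne_zero ENNReal.ofNat_ne_top, hcover]
  · exact disjoint_left.mpr fun u (h0 : ℓ u = 0) (hpos : 0 < ℓ u) => hpos.ne' h0

end HalfSpace

theorem Filter.Eventually.exists_forall_Ioc_of_prod_nhdsGT {X : Type*} {l : Filter X}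
    {P : X → ℝ → Prop} (h : ∀ᶠ q in l ×ˢ 𝓝[>] 0, P q.1 q.2) :
    ∃ c > 0, ∀ᶠ x in l, ∀ σ ∈ Ioc 0 c, P x σ := by
  obtain ⟨pa, ha, pb, hb, hP⟩ := eventually_prod_iff.mp h
  obtain ⟨c, hc, hsub⟩ := mem_nhdsGT_iff_exists_Ioc_subset.mp hb
  exact ⟨c, hc, ha.mono fun x hx σ hσ => hP hx (hsub hσ)⟩

theorem exists_lowerSemicontinuous_minorant {X : Type*} [TopologicalSpace X] {Y : Set X}
    {φ : X → ℝ≥0∞} (h : ∀ y ∈ Y, ∃ c > 0, ∀ᶠ x in 𝓝 y, ENNReal.ofReal c ≤ φ x) :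
    ∃ ξ : X → ℝ, LowerSemicontinuous ξ ∧
      ∀ x ∈ Y, 0 < ξ x ∧ ξ x ≤ 1 ∧ ENNReal.ofReal (ξ x) ≤ φ x := by
  have h' : ∀ y : Y, ∃ c ∈ Ioc (0 : ℝ) 1, ∃ U : Set X, IsOpen U ∧ ↑y ∈ U ∧
      ∀ x ∈ U, ENNReal.ofReal c ≤ φ x := by
    intro y
    obtain ⟨c, hc, hev⟩ := h y y.2
    obtain ⟨U, hUφ, hUo, hyU⟩ := eventually_nhds_iff.mp hev
    exact ⟨min c 1, ⟨lt_min hc one_pos, min_le_right _ _⟩, U, hUo, hyU,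
      fun x hx => (ENNReal.ofReal_le_ofReal (min_le_left _ _)).trans (hUφ x hx)⟩
  choose c hc U hUo hyU hUφ using h'
  set bump : Y → X → ℝ := fun y => (U y).indicator fun _ => c y
  have hbump_le : ∀ y x, bump y x ≤ 1 := fun y x =>
    (indicator_le_self' (fun _ _ => (hc y).1.le) x).trans (hc y).2
  have hbdd : ∀ x, BddAbove (range fun y => bump y x) :=
    fun x => ⟨1, forall_mem_range.mpr fun y => hbump_le y x⟩
  refine ⟨fun x => ⨆ y, bump y x,
    lowerSemicontinuous_ciSup hbdd fun y => (hUo y).lowerSemicontinuous_indicator (hc y).1.le,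
    fun x hx => ?_⟩
  have : Nonempty Y := ⟨⟨x, hx⟩⟩
  refine ⟨?_, ciSup_le fun y => hbump_le y x, ?_⟩
  · calc 0 < c ⟨x, hx⟩ := (hc _).1
      _ = bump ⟨x, hx⟩ x := (indicator_of_mem (hyU _) fun _ => c ⟨x, hx⟩).symm
      _ ≤ ⨆ y, bump y x := le_ciSup (hbdd x) _
  · rcases eq_or_ne (φ x) ⊤ with htop | htop
    · simp [htop]
    rw [ENNReal.ofReal_le_iff_le_toReal htop]
    exact ciSup_le fun y => indicator_apply_le'
      (fun hxU => (ENNReal.ofReal_le_iff_le_toReal htop).mp (hUφ y x hxU))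
      fun _ => ENNReal.toReal_nonneg

section Gaussian

variable {d : ℕ}

noncomputable def gaussPDF (d : ℕ) (m : EuclideanSpace ℝ (Fin d)) (σ : ℝ)
    (x : EuclideanSpace ℝ (Fin d)) : ℝ :=
  (2 * Real.pi) ^ (-(d : ℝ) / 2) * (σ ^ d)⁻¹ * Real.exp (-‖x - m‖ ^ 2 / (2 * σ ^ 2))

theorem gaussES_eq_withDensity (m : EuclideanSpace ℝ (Fin d)) (σ : ℝ) :
    gaussES d m σ = volume.withDensity fun x => ENNReal.ofReal (gaussPDF d m σ x) := rfl

@[fun_prop]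
theorem measurable_gaussPDF (m : EuclideanSpace ℝ (Fin d)) (σ : ℝ) :
    Measurable (gaussPDF d m σ) := by
  unfold gaussPDF; fun_prop

theorem gaussPDF_affine (m u : EuclideanSpace ℝ (Fin d)) {σ : ℝ} (hσ : 0 < σ) :
    σ ^ d * gaussPDF d m σ (m + σ • u) = gaussPDF d 0 1 u := by
  have hnorm : ‖m + σ • u - m‖ = σ * ‖u‖ := by
    simp [norm_smul, abs_of_pos hσ]
  simp only [gaussPDF, hnorm, sub_zero, one_pow, inv_one, mul_one]
  field_simp

theorem map_volume_affine (m : EuclideanSpace ℝ (Fin d)) {σ : ℝ} (hσ : 0 < σ) :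
    (volume : Measure (EuclideanSpace ℝ (Fin d))).map (fun u => m + σ • u) =
      ENNReal.ofReal (σ ^ d)⁻¹ • volume := by
  have : (fun u : EuclideanSpace ℝ (Fin d) => m + σ • u) = (m + ·) ∘ (σ • ·) := rfl
  rw [this, ← Measure.map_map (by fun_prop) (by fun_prop), Measure.map_addHaar_smul volume hσ.ne',
    Measure.map_smul, map_add_left_eq_self, finrank_euclideanSpace_fin, abs_of_pos (by positivity)]

theorem gaussES_eq_map (m : EuclideanSpace ℝ (Fin d)) {σ : ℝ} (hσ : 0 < σ) :
    gaussES d m σ = (gaussES d 0 1).map (fun u => m + σ • u) := by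
  have hT : Measurable fun u : EuclideanSpace ℝ (Fin d) => m + σ • u := by fun_prop
  have hvol : (volume : Measure (EuclideanSpace ℝ (Fin d))) =
      ENNReal.ofReal (σ ^ d) • volume.map (fun u => m + σ • u) := by
    rw [map_volume_affine m hσ, smul_smul, ← ENNReal.ofReal_mul (by positivity),
      mul_inv_cancel₀ (by positivity), ENNReal.ofReal_one, one_smul]
  ext A hA
  rw [Measure.map_apply hT hA, gaussES_eq_withDensity, gaussES_eq_withDensity,
    withDensity_apply _ hA, withDensity_apply _ (hT hA)]
  conv_lhs => rw [hvol]
  rw [Measure.restrict_smul, lintegral_smul_measure, Measure.restrict_map hT hA,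
    lintegral_map (by fun_prop) hT, smul_eq_mul, ← lintegral_const_mul' _ _ ENNReal.ofReal_ne_top]
  refine lintegral_congr fun u => ?_
  rw [← ENNReal.ofReal_mul (by positivity), gaussPDF_affine m u hσ]

instance : IsProbabilityMeasure (gaussES d 0 1) := by
  constructor
  have hpdf : gaussPDF d 0 1 =
      fun x => (2 * Real.pi) ^ (-(d : ℝ) / 2) * Real.exp (-(1 / 2) * ‖x‖ ^ 2) := by
    ext x; simp only [gaussPDF, sub_zero]; ring_nf
  have hint : ∫ x : EuclideanSpace ℝ (Fin d), Real.exp (-(1 / 2) * ‖x‖ ^ 2) =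
      (2 * Real.pi) ^ ((d : ℝ) / 2) := by
    rw [GaussianFourier.integral_rexp_neg_mul_sq_norm (by norm_num), finrank_euclideanSpace_fin]
    ring_nf
  have hintegrable : Integrable fun x : EuclideanSpace ℝ (Fin d) =>
      Real.exp (-(1 / 2) * ‖x‖ ^ 2) :=
    .of_integral_ne_zero (by rw [hint]; positivity)
  rw [gaussES_eq_withDensity, withDensity_apply _ MeasurableSet.univ, Measure.restrict_univ, hpdf,
    ← ofReal_integral_eq_lintegral_ofReal (hintegrable.const_mul _)
      (ae_of_all _ fun _ => by positivity), integral_const_mul, hint,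
    ← Real.rpow_add (by positivity), neg_div, neg_add_cancel,
    Real.rpow_zero, ENNReal.ofReal_one]

instance : (gaussES d 0 1).IsNegInvariant := by
  constructor
  ext A hA
  rw [Measure.neg_apply, gaussES_eq_withDensity, withDensity_apply _ hA, withDensity_apply _ hA.neg,
    ← (Measure.measurePreserving_neg volume).setLIntegral_comp_preimage hA (by fun_prop)]
  simp [gaussPDF]

theorem gaussES_absolutelyContinuous (m : EuclideanSpace ℝ (Fin d)) (σ : ℝ) :
    gaussES d m σ ≪ volume :=
  withDensity_absolutelyContinuous _ _

theorem pLt_eq_gaussES_preimage {f : EuclideanSpace ℝ (Fin d) → ℝ} (hf : Measurable f)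
    (x : EuclideanSpace ℝ (Fin d)) {σ : ℝ} (hσ : 0 < σ) :
    pLt d f x σ = gaussES d 0 1 {u | f (x + σ • u) < f x} := by
  rw [pLt, gaussES_eq_map x hσ, Measure.map_apply (by fun_prop)
    (measurableSet_lt hf measurable_const)]
  rfl

theorem tendsto_pLt_half {f : EuclideanSpace ℝ (Fin d) → ℝ} (hfm : Measurable f)
    {f' : EuclideanSpace ℝ (Fin d) →L[ℝ] ℝ} {m : EuclideanSpace ℝ (Fin d)}
    (hf : HasStrictFDerivAt f f' m) (hf' : f' ≠ 0) :
    Tendsto (fun q : EuclideanSpace ℝ (Fin d) × ℝ => pLt d f q.1 q.2) (𝓝 m ×ˢ 𝓝[>] 0)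
      (𝓝 (1 / 2)) := by
  have hL : 𝓝 m ×ˢ 𝓝[>] (0 : ℝ) ≤ 𝓝 m ×ˢ 𝓝[≠] 0 :=
    Filter.prod_mono le_rfl (nhdsWithin_mono _ fun _ h => ne_of_gt h)
  have hpos : ∀ᶠ q : EuclideanSpace ℝ (Fin d) × ℝ in 𝓝 m ×ˢ 𝓝[>] 0, 0 < q.2 :=
    tendsto_snd.eventually self_mem_nhdsWithin
  have hoff : ∀ᵐ u ∂gaussES d 0 1, f' u ≠ 0 := measure_eq_zero_iff_ae_notMem.mp <|
    measure_hyperplane_eq_zero (gaussES_absolutelyContinuous 0 1) hf'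
  rw [← measure_neg_halfSpace_eq_half (gaussES_absolutelyContinuous 0 1) hf']
  refine (tendsto_measure_of_ae_tendsto_indicator_of_isFiniteMeasure _
    (measurableSet_lt f'.measurable measurable_const)
    (fun q => measurableSet_lt (by fun_prop) measurable_const) ?_).congr'
    (hpos.mono fun q hq => (pLt_eq_gaussES_preimage hfm q.1 hq).symm)
  filter_upwards [hoff] with u hu
  have hslope := (hf.tendsto_inv_smul_sub u).mono_left hL
  have hsign : ∀ᶠ q : EuclideanSpace ℝ (Fin d) × ℝ in 𝓝 m ×ˢ 𝓝[>] 0,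
      (q.2⁻¹ • (f (q.1 + q.2 • u) - f q.1) < 0 ↔ f' u < 0) := by
    rcases hu.lt_or_gt with hu_neg | hu_pos
    · exact (hslope.eventually_lt_const hu_neg).mono fun _ hq => iff_of_true hq hu_neg
    · exact (hslope.eventually_const_lt hu_pos).mono fun _ hq =>
        iff_of_false hq.not_gt hu_pos.not_gt
  filter_upwards [hpos, hsign] with q hq hq'
  rw [← hq', smul_neg_iff_of_pos_left (inv_pos.mpr hq), sub_neg]

theorem ofReal_le_xiES {f : EuclideanSpace ℝ (Fin d) → ℝ} {p c : ℝ}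
    {x : EuclideanSpace ℝ (Fin d)} (h : ∀ σ ∈ Ioc 0 c, ENNReal.ofReal p < pLt d f x σ) :
    ENNReal.ofReal c ≤ xiES d f p x := by
  refine le_sInf ?_
  rintro _ ⟨σ, hσ, rfl, hle⟩
  exact ENNReal.ofReal_le_ofReal <| le_of_not_ge fun hσc => (h σ ⟨hσ, hσc⟩).not_ge hle

theorem exists_pos_eventually_ofReal_le_xiES {f : EuclideanSpace ℝ (Fin d) → ℝ}
    (hf : ContDiff ℝ 1 f) {p : ℝ} (hp : p < 1 / 2) {m : EuclideanSpace ℝ (Fin d)}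
    (hm : gradient f m ≠ 0) : ∃ c > 0, ∀ᶠ x in 𝓝 m, ENNReal.ofReal c ≤ xiES d f p x := by
  have hf' : fderiv ℝ f m ≠ 0 := fun h => hm (by simp [gradient, h])
  have hp' : ENNReal.ofReal p < 1 / 2 := by
    rw [← ENNReal.ofReal_ofNat 2, ← ENNReal.ofReal_one, ← ENNReal.ofReal_div_of_pos two_pos]
    exact (ENNReal.ofReal_lt_ofReal_iff (by norm_num)).mpr hp
  have hev := (tendsto_pLt_half hf.continuous.measurable
    (hf.contDiffAt.hasStrictFDerivAt one_ne_zero) hf').eventually (lt_mem_nhds hp')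
  obtain ⟨c, hc, hcx⟩ :=
    hev.exists_forall_Ioc_of_prod_nhdsGT (P := fun x σ => ENNReal.ofReal p < pLt d f x σ)
  exact ⟨c, hc, hcx.mono fun _ => ofReal_le_xiES⟩

end Gaussian

theorem improvable_on_regular_points_general
    (d : ℕ)
    (f : EuclideanSpace ℝ (Fin d) → ℝ) (hf : ContDiff ℝ 1 f)
    (p : ℝ) (hp : p < 1 / 2) :
    ∃ ξt : EuclideanSpace ℝ (Fin d) → ℝ,
      LowerSemicontinuousOn ξt {x | gradient f x ≠ 0} ∧
      ∀ x ∈ {x : EuclideanSpace ℝ (Fin d) | gradient f x ≠ 0},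
        0 < ξt x ∧ ξt x ≤ 1 ∧ ENNReal.ofReal (ξt x) ≤ xiES d f p x := by
  obtain ⟨ξ, hξ, hξY⟩ := exists_lowerSemicontinuous_minorant fun m (hm : gradient f m ≠ 0) =>
    exists_pos_eventually_ofReal_le_xiES hf hp hm
  exact ⟨ξ, hξ.lowerSemicontinuousOn _, hξY⟩

/-- A continuously differentiable `f` is `p`-improvable on its set
`Y` of regular points, for every `0 < p < 1/2`: there is a lower semicontinuous
function `ξ̃ : Y → (0,1]` with `ξ̃ ≤ ξ_p^f` on `Y`. -/
theorem improvable_on_regular_points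
    (d : ℕ) (hd : 1 ≤ d)
    (f : EuclideanSpace ℝ (Fin d) → ℝ) (hf : ContDiff ℝ 1 f)
    (p : ℝ) (hp0 : 0 < p) (hp : p < 1 / 2) :
    ∃ ξt : EuclideanSpace ℝ (Fin d) → ℝ,
      LowerSemicontinuousOn ξt {x | gradient f x ≠ 0} ∧
      ∀ x ∈ {x : EuclideanSpace ℝ (Fin d) | gradient f x ≠ 0},
        0 < ξt x ∧ ξt x ≤ 1 ∧ ENNReal.ofReal (ξt x) ≤ xiES d f p x :=
  improvable_on_regular_points_general d f hf p hp
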